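/- Let a ≥ |μ|/2 and let e : (a,∞) → M₂(ℂ) be continuous and bounded such that e(x) = (I − ½Q₀(x))^{−1}·e⁰(x)·(I + ∫_x^∞ D(t) dt) for all x > a, where D(t) = ½·e⁰(t)^{−1}·(Q₀′(t) + Q₀(t)·B·Q₀(t))·e(t) and the integral converges absolutely. Then e is differentiable on (a,∞) and satisfies B·e′(x) + Q₀(x)·e(x) = e(x) for all x > a. -/

import Mathlib

open Complex Matrix Set MeasureTheory

attribute [local instance] Matrix.linftyOpNormedRing Matrix.linftyOpNormedAlgebra

noncomputable def Bmat : Matrix (Fin 2) (Fin 2) ℂ := !![0, 1; -1, 0]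
noncomputable def Jmat : Matrix (Fin 2) (Fin 2) ℂ := !![0, 1; 1, 0]

/-- `Q₀(x) = (μ/x) J`. -/
noncomputable def Q0 (μ : ℂ) (x : ℝ) : Matrix (Fin 2) (Fin 2) ℂ := (μ / (x : ℂ)) • Jmat

/-- `e⁰(x) = [[i e^{ix}, -i e^{-ix}],[e^{ix}, e^{-ix}]]`. -/
noncomputable def e0 (x : ℝ) : Matrix (Fin 2) (Fin 2) ℂ :=
  !![Complex.I * Complex.exp (Complex.I * x), -Complex.I * Complex.exp (-(Complex.I * x));
     Complex.exp (Complex.I * x), Complex.exp (-(Complex.I * x))]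

/-- `D(t) = ½ e⁰(t)⁻¹ (Q₀'(t) + Q₀(t) B Q₀(t)) e(t)`, with `Q₀'(t) = -(μ/t²) J`. -/
noncomputable def Dker (μ : ℂ) (e : ℝ → Matrix (Fin 2) (Fin 2) ℂ) (t : ℝ) :
    Matrix (Fin 2) (Fin 2) ℂ :=
  (1 / 2 : ℂ) • ((e0 t)⁻¹ * ((-(μ / (t : ℂ) ^ 2)) • Jmat + Q0 μ t * Bmat * Q0 μ t) * e t)

/-! With `P = 1 - ½ Q₀` and `F = e⁰ (1 + ∫ₓ^∞ D)`, the hypothesis reads `P e = F`. Since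
`e⁰' = -B e⁰` and `(∫ₓ^∞ D)' = -D`, we get `F' = -B F - ½ (Q₀' + Q₀ B Q₀) e`, while `P' = -½ Q₀'`;
hence `P e' = -B P e - ½ Q₀ B Q₀ e`. Because `Q₀` anticommutes with `B`, the right-hand side is also
`P (-B (1 - Q₀) e)`, so cancelling the invertible `P` gives `e' = -B (1 - Q₀) e`, which is
`B e' + Q₀ e = e` as `B² = -1`. -/

open Filter Topology

theorem hasDerivAt_integral_Ioi {E : Type*} [NormedAddCommGroup E] [NormedSpace ℝ E]
    [CompleteSpace E] {f : ℝ → E} {c x : ℝ} (hf : IntegrableOn f (Ioi c)) (hcx : c < x)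
    (hfx : ContinuousAt f x) :
    HasDerivAt (fun y => ∫ t in Ioi y, f t) (-f x) x := by
  have hsplit : ∀ᶠ y in 𝓝 x, ∫ t in Ioi y, f t = (∫ t in Ioi c, f t) - ∫ t in c..y, f t := by
    filter_upwards [Ioi_mem_nhds hcx] with y hy
    rw [← intervalIntegral.integral_Ioi_sub_Ioi hf (le_of_lt hy), sub_sub_cancel]
  have hii : IntervalIntegrable f volume c x :=
    (intervalIntegrable_iff_integrableOn_Ioc_of_le hcx.le).2 (hf.mono_set Ioc_subset_Ioi_self)
  have hmeas : StronglyMeasurableAtFilter f (𝓝 x) :=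
    AEStronglyMeasurable.stronglyMeasurableAtFilter_of_mem hf.aestronglyMeasurable
      (Ioi_mem_nhds hcx)
  exact ((intervalIntegral.integral_hasDerivAt_right hii hmeas hfx).const_sub _)
    |>.congr_of_eventuallyEq hsplit

theorem HasDerivAt.inverse_mul {R : Type*} [NormedRing R] [NormedAlgebra ℝ R]
    [HasSummableGeomSeries R] {P F y : ℝ → R} {P' F' : R} {x : ℝ}
    (hP : HasDerivAt P P' x) (hF : HasDerivAt F F' x) (hunit : IsUnit (P x))
    (hy : ∀ᶠ t in 𝓝 x, y t = Ring.inverse (P t) * F t) :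
    HasDerivAt y (Ring.inverse (P x) * (F' - P' * y x)) x := by
  obtain ⟨u, hu⟩ := hunit
  have hinv : HasDerivAt (fun t => Ring.inverse (P t)) (-(↑u⁻¹ * P' * ↑u⁻¹)) x := by
    have h := hasFDerivAt_ringInverse (𝕜 := ℝ) u
    rw [hu] at h
    exact (h.comp_hasDerivAt x hP).congr_deriv (by simp)
  refine ((hinv.mul hF).congr_of_eventuallyEq hy).congr_deriv ?_
  rw [hy.self_of_nhds, ← hu, Ring.inverse_unit]
  noncomm_ring

theorem mul_add_mul_eq_self_of_one_sub_half_smul_mul_eq {𝕜 A : Type*} [Field 𝕜] [CharZero 𝕜]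
    [Ring A] [Algebra 𝕜 A] {B Q y y' : A} (hB : B * B = -1) (hQB : Q * B = -(B * Q))
    (hP : IsUnit (1 - (1 / 2 : 𝕜) • Q))
    (h : (1 - (1 / 2 : 𝕜) • Q) * y' =
      -(B * ((1 - (1 / 2 : 𝕜) • Q) * y)) - (1 / 2 : 𝕜) • (Q * B * Q * y)) :
    B * y' + Q * y = y := by
  have hy' : y' = -(B * (y - Q * y)) := by
    have hQBy : Q * (B * y) = -(B * (Q * y)) := by rw [← mul_assoc, hQB, neg_mul, mul_assoc]
    refine hP.mul_left_cancel (h.trans ?_)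
    simp only [mul_sub, sub_mul, one_mul, smul_mul_assoc, mul_smul_comm, mul_neg, mul_assoc,
      hQBy]
    module
  rw [hy', mul_neg, ← mul_assoc, hB]
  noncomm_ring

theorem Bmat_mul_Bmat : Bmat * Bmat = -1 := by
  ext i j; fin_cases i <;> fin_cases j <;> simp [Bmat, mul_apply, Fin.sum_univ_two, one_apply]

theorem Q0_mul_Bmat (μ : ℂ) (x : ℝ) : Q0 μ x * Bmat = -(Bmat * Q0 μ x) := by
  have hJB : Jmat * Bmat = -(Bmat * Jmat) := by
    ext i j; fin_cases i <;> fin_cases j <;> simp [Bmat, Jmat, mul_apply, Fin.sum_univ_two]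
  rw [Q0, smul_mul_assoc, hJB, mul_smul_comm, smul_neg]

theorem det_one_sub_smul_Jmat (c : ℂ) : (1 - c • Jmat).det = 1 - c ^ 2 := by
  simp [det_fin_two, Jmat, sq]

theorem isUnit_one_sub_half_smul_Q0 {μ : ℂ} {x : ℝ} (hx : ‖μ‖ < 2 * x) :
    IsUnit (1 - (1 / 2 : ℂ) • Q0 μ x) := by
  have hx0 : 0 < x := by linarith [norm_nonneg μ]
  have hc : ‖(1 / 2 : ℂ) * (μ / x)‖ < 1 := by
    rw [norm_mul, norm_div, norm_div, Complex.norm_real, Real.norm_of_nonneg hx0.le, norm_one,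
      Complex.norm_ofNat, div_mul_div_comm, one_mul, div_lt_one (by positivity)]
    exact hx
  rw [isUnit_iff_isUnit_det, Q0, smul_smul, det_one_sub_smul_Jmat, isUnit_iff_ne_zero, sub_ne_zero]
  intro h
  have := congrArg norm h
  rw [norm_one, norm_pow] at this
  nlinarith [norm_nonneg ((1 / 2 : ℂ) * (μ / x))]

theorem det_e0 (x : ℝ) : (e0 x).det = 2 * I := by
  have h : Complex.exp (I * x) * Complex.exp (-(I * x)) = 1 := by
    rw [← Complex.exp_add, add_neg_cancel, Complex.exp_zero]
  rw [e0, det_fin_two_of]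
  linear_combination (2 * I) * h

theorem hasDerivAt_e0 (x : ℝ) : HasDerivAt e0 (-(Bmat * e0 x)) x := by
  have hexp : ∀ c : ℂ, HasDerivAt (fun t : ℝ => Complex.exp (c * t)) (c * Complex.exp (c * x)) x :=
    fun c => by simpa [mul_comm] using (((hasDerivAt_id (x : ℂ)).const_mul c).cexp).comp_ofReal
  have he0 : e0 = fun t : ℝ =>
      Complex.exp (I * t) • !![I, 0; 1, 0] + Complex.exp (-I * t) • !![0, -I; 0, 1] := by
    funext t; ext i j; fin_cases i <;> fin_cases j <;> simp [e0, mul_comm]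
  rw [he0]
  refine ((hexp I).smul_const _).add ((hexp (-I)).smul_const _) |>.congr_deriv ?_
  ext i j; fin_cases i <;> fin_cases j <;> simp [Bmat] <;> ring_nf <;> simp [I_sq]

theorem e0_mul_inv (x : ℝ) : e0 x * (e0 x)⁻¹ = 1 :=
  mul_nonsing_inv _ (by rw [det_e0]; exact Ne.isUnit (by simp))

theorem continuous_e0_inv : Continuous fun x => (e0 x)⁻¹ := by
  simp_rw [Matrix.inv_def, det_e0]
  exact (continuous_const (y := Ring.inverse (2 * I))).smul
    (continuous_iff_continuousAt.2 fun x => (hasDerivAt_e0 x).continuousAt).matrix_adjugate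

theorem hasDerivAt_Q0 (μ : ℂ) {x : ℝ} (hx : x ≠ 0) :
    HasDerivAt (Q0 μ) ((-(μ / (x : ℂ) ^ 2)) • Jmat) x := by
  have h := ((hasDerivAt_inv (by exact_mod_cast hx : (x : ℂ) ≠ 0)).const_mul μ).comp_ofReal
  exact (h.smul_const Jmat).congr_deriv (by rw [mul_neg, div_eq_mul_inv])

theorem continuousAt_Dker (μ : ℂ) {e : ℝ → Matrix (Fin 2) (Fin 2) ℂ} {x : ℝ} (hx : x ≠ 0)
    (he : ContinuousAt e x) : ContinuousAt (Dker μ e) x := by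
  have hQ : ContinuousAt (Q0 μ) x := (hasDerivAt_Q0 μ hx).continuousAt
  have hc : ContinuousAt (fun t : ℝ => -(μ / (t : ℂ) ^ 2)) x := by
    refine (continuousAt_const.div ?_ (by exact_mod_cast pow_ne_zero 2 hx)).neg
    fun_prop
  exact (continuousAt_const (y := (1 / 2 : ℂ))).smul ((continuous_e0_inv.continuousAt.mul
    ((hc.smul continuousAt_const).add ((hQ.mul continuousAt_const).mul hQ))).mul he)

theorem e0_mul_Dker (μ : ℂ) (e : ℝ → Matrix (Fin 2) (Fin 2) ℂ) (x : ℝ) :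
    e0 x * Dker μ e x =
      (1 / 2 : ℂ) • (((-(μ / (x : ℂ) ^ 2)) • Jmat + Q0 μ x * Bmat * Q0 μ x) * e x) := by
  rw [Dker, mul_smul_comm, mul_assoc, ← mul_assoc (e0 x), e0_mul_inv, one_mul]

theorem stmt1_general (μ : ℂ) (a : ℝ) (ha : a ≥ ‖μ‖ / 2)
    (e : ℝ → Matrix (Fin 2) (Fin 2) ℂ)
    (hcont : ContinuousOn e (Set.Ioi a))
    (hint : ∀ x ∈ Set.Ioi a, @IntegrableOn ℝ (Matrix (Fin 2) (Fin 2) ℂ) _ _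
      NormedAddCommGroup.toENormedAddCommMonoid.toContinuousENorm (fun t => Dker μ e t) (Set.Ioi x) volume)
    (heq : ∀ x ∈ Set.Ioi a,
      e x = (1 - (1 / 2 : ℂ) • Q0 μ x)⁻¹ * e0 x *
        (1 + ∫ t in Set.Ioi x, Dker μ e t)) :
    ∀ x ∈ Set.Ioi a, DifferentiableAt ℝ e x ∧
      Bmat * deriv e x + Q0 μ x * e x = e x := by
  intro x hx
  have hμx : ‖μ‖ < 2 * x := by linarith [mem_Ioi.1 hx]
  have hx0 : x ≠ 0 := by linarith [norm_nonneg μ]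
  have hunit := isUnit_one_sub_half_smul_Q0 hμx
  obtain ⟨c, hac, hcx⟩ := exists_between (mem_Ioi.1 hx)
  have hG : HasDerivAt (fun y => ∫ t in Ioi y, Dker μ e t) (-Dker μ e x) x :=
    hasDerivAt_integral_Ioi (hint c hac) hcx
      (continuousAt_Dker μ hx0 (hcont.continuousAt (Ioi_mem_nhds hx)))
  have hF := (hasDerivAt_e0 x).fun_mul (hG.const_add 1)
  have hP := ((hasDerivAt_Q0 μ hx0).fun_const_smul (1 / 2 : ℂ)).const_sub 1
  have he := hP.inverse_mul (y := e) hF hunit <| by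
    filter_upwards [Ioi_mem_nhds hx] with y hy
    rw [heq y hy, mul_assoc, nonsing_inv_eq_ringInverse]
  refine ⟨he.differentiableAt, ?_⟩
  rw [show deriv e x = _ from he.deriv]
  refine mul_add_mul_eq_self_of_one_sub_half_smul_mul_eq Bmat_mul_Bmat (Q0_mul_Bmat μ x) hunit ?_
  have hPe : (1 - (1 / 2 : ℂ) • Q0 μ x) * e x = e0 x * (1 + ∫ t in Ioi x, Dker μ e t) := by
    rw [heq x hx, mul_assoc, ← mul_assoc, mul_nonsing_inv _ ((isUnit_iff_isUnit_det _).1 hunit),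
      one_mul]
  rw [Ring.mul_inverse_cancel_left _ _ hunit, mul_neg, e0_mul_Dker, neg_mul, mul_assoc Bmat, ← hPe]
  simp only [add_mul, neg_mul, smul_mul_assoc]
  module

theorem stmt1 (μ : ℂ) (hμ : 0 < μ.re) (a : ℝ) (ha : a ≥ ‖μ‖ / 2)
    (e : ℝ → Matrix (Fin 2) (Fin 2) ℂ)
    (hcont : ContinuousOn e (Set.Ioi a))
    (hbdd : ∃ M : ℝ, ∀ x ∈ Set.Ioi a, ‖e x‖ ≤ M)
    (hint : ∀ x ∈ Set.Ioi a, @IntegrableOn ℝ (Matrix (Fin 2) (Fin 2) ℂ) _ _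
      NormedAddCommGroup.toENormedAddCommMonoid.toContinuousENorm (fun t => Dker μ e t) (Set.Ioi x) volume)
    (heq : ∀ x ∈ Set.Ioi a,
      e x = (1 - (1 / 2 : ℂ) • Q0 μ x)⁻¹ * e0 x *
        (1 + ∫ t in Set.Ioi x, Dker μ e t)) :
    ∀ x ∈ Set.Ioi a, DifferentiableAt ℝ e x ∧
      Bmat * deriv e x + Q0 μ x * e x = e x :=
  stmt1_general μ a ha e hcont hint heq
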